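/- In the four-element algebra B10 with carrier {0, 1', 0', 1} (the Boolean algebra with atoms 1' and 0'), converse the identity function, and relative multiplication given by: x;0'=0';x=0' for all x, 0;1=1;0=0', 0;0=0;1'=1';0=0, 1';1'=1', 1';1=1;1'=1;1=1, axioms (R1)-(R9) all hold but Tarski's law (R10) fails, since 0'⁻;-(0';0') = 0';1' = 0' which is not ≤ 1' = -0'. -/

import Mathlib

/-- The four-element carrier {0, 1', 0', 1} of the algebra B10: the Boolean
algebra with atoms 1' (the identity element) and 0' = -1' (diversity). -/
inductive B10 where
  | zero  -- 0
  | id'   -- 1'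
  | div   -- 0'
  | one   -- 1
deriving DecidableEq

/-- Boolean join on B10. -/
def addB : B10 → B10 → B10
  | .zero, x => x
  | x, .zero => x
  | .one, _ => .one
  | _, .one => .one
  | .id', .id' => .id'
  | .div, .div => .div
  | .id', .div => .one
  | .div, .id' => .one

/-- Boolean complement on B10. -/
def complB : B10 → B10
  | .zero => .one
  | .id' => .div
  | .div => .id'
  | .one => .zero

/-- Relative multiplication on B10: x;0' = 0';x = 0' for all x,
0;1 = 1;0 = 0', 0;0 = 0;1' = 1';0 = 0, 1';1' = 1', 1';1 = 1;1' = 1;1 = 1. -/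
def mulB : B10 → B10 → B10
  | _, .div => .div
  | .div, _ => .div
  | .zero, .one => .div
  | .one, .zero => .div
  | .zero, _ => .zero
  | _, .zero => .zero
  | .id', x => x
  | .one, _ => .one

/-- Converse on B10: the identity function. -/
def convB (r : B10) : B10 := r

/-!
Converse is the identity, so (R6) and (R9) hold trivially and (R7) is the commutativity of the
table of `;`; the other axioms are finite case checks. Since 0' is absorbing for `;`, Tarski's
law at r = s = 0' demands 0' ≤ -0' = 1', which fails.
-/

theorem addB_comm (r s : B10) : addB r s = addB s r := by
  cases r <;> cases s <;> rfl

theorem addB_assoc (r s t : B10) : addB r (addB s t) = addB (addB r s) t := by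
  cases r <;> cases s <;> cases t <;> rfl

theorem addB_complB_huntington (r s : B10) :
    addB (complB (addB (complB r) s)) (complB (addB (complB r) (complB s))) = r := by
  cases r <;> cases s <;> rfl

theorem mulB_assoc (r s t : B10) : mulB r (mulB s t) = mulB (mulB r s) t := by
  cases r <;> cases s <;> cases t <;> rfl

theorem mulB_id' (r : B10) : mulB r B10.id' = r := by
  cases r <;> rfl

theorem mulB_comm (r s : B10) : mulB r s = mulB s r := by
  cases r <;> cases s <;> rfl

theorem addB_mulB (r s t : B10) : mulB (addB r s) t = addB (mulB r t) (mulB s t) := by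
  cases r <;> cases s <;> cases t <;> rfl

theorem convB_convB (r : B10) : convB (convB r) = r := rfl

theorem convB_mulB (r s : B10) : convB (mulB r s) = mulB (convB s) (convB r) :=
  mulB_comm r s

theorem convB_addB (r s : B10) : convB (addB r s) = addB (convB r) (convB s) := rfl

theorem not_forall_tarski_law :
    ¬ ∀ r s, addB (mulB (convB r) (complB (mulB r s))) (complB s) = complB s :=
  fun h => B10.noConfusion (h B10.div B10.div)

/-- In the algebra B10, axioms (R1)-(R9) all hold but Tarski's law (R10)
fails, since 0'⁻;-(0';0') = 0';1' = 0', which is not ≤ 1' = -0'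
(where r ≤ s means r+s=s). -/
theorem R10_independent_B10 :
    (∀ r s, addB r s = addB s r) ∧
    (∀ r s t, addB r (addB s t) = addB (addB r s) t) ∧
    (∀ r s, addB (complB (addB (complB r) s))
        (complB (addB (complB r) (complB s))) = r) ∧
    (∀ r s t, mulB r (mulB s t) = mulB (mulB r s) t) ∧
    (∀ r, mulB r B10.id' = r) ∧
    (∀ r, convB (convB r) = r) ∧
    (∀ r s, convB (mulB r s) = mulB (convB s) (convB r)) ∧
    (∀ r s t, mulB (addB r s) t = addB (mulB r t) (mulB s t)) ∧
    (∀ r s, convB (addB r s) = addB (convB r) (convB s)) ∧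
    ¬ (∀ r s, addB (mulB (convB r) (complB (mulB r s))) (complB s) = complB s) ∧
    mulB (convB B10.div) (complB (mulB B10.div B10.div)) = B10.div ∧
    ¬ (addB B10.div B10.id' = B10.id') :=
  ⟨addB_comm, addB_assoc, addB_complB_huntington, mulB_assoc, mulB_id', convB_convB, convB_mulB,
    addB_mulB, convB_addB, not_forall_tarski_law, rfl, B10.noConfusion⟩
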